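/- Let N ≥ 1 and let h be a natural number with N + 2h ≠ 2. Let P be a polynomial over ℝ in N variables (MvPolynomial (Fin N) ℝ) which is homogeneous of degree h and formally harmonic. Then for each j: (a) the polynomial pderiv j P is homogeneous of degree h−1 (it is zero when h = 0) and formally harmonic; and (b) the polynomial X_j·P + (1/(2 − N − 2h))·(Σ_{i} X_i²)·pderiv j P is homogeneous of degree h+1 and formally harmonic. -/

import Mathlib

/-!
The Laplacian commutes with `∂_j`, which gives (a). For (b), the product rule gives
`Δ(X_j P) = 2 ∂_j P + X_j ΔP`, and together with Euler's identity `∑ X_i ∂_i Q = (h - 1) Q` for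
`Q = ∂_j P` it gives `Δ(|X|² Q) = (2N + 4(h - 1)) Q + |X|² ΔQ`. For harmonic `P` the Laplacian of
`X_j P + c |X|² ∂_j P` is therefore `(2 + c (2N + 4h - 4)) ∂_j P`, and `c = 1/(2 - N - 2h)` is the
coefficient that makes it vanish.
-/

open MvPolynomial

def IsFormallyHarmonicReal {N : ℕ} (P : MvPolynomial (Fin N) ℝ) : Prop :=
  ∑ i : Fin N, pderiv i (pderiv i P) = 0

namespace MvPolynomial

variable {R σ : Type*} [CommRing R]

theorem pderiv_pderiv_comm (i j : σ) (p : MvPolynomial σ R) :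
    pderiv i (pderiv j p) = pderiv j (pderiv i p) := by
  have hcomm : ⁅pderiv i, pderiv j⁆ = (0 : Derivation R (MvPolynomial σ R) (MvPolynomial σ R)) :=
    derivation_ext fun k => by
      classical
      rw [Derivation.commutator_apply]
      simp [pderiv_X, Pi.single_apply, apply_ite (pderiv _)]
  simpa [Derivation.commutator_apply, sub_eq_zero] using congr($hcomm p)

theorem IsHomogeneous.pderiv_eq_zero {p : MvPolynomial σ R} (hp : p.IsHomogeneous 0) (i : σ) :
    pderiv i p = 0 := by
  rw [← totalDegree_zero_iff_isHomogeneous, totalDegree_eq_zero_iff_eq_C] at hp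
  rw [hp, pderiv_C]

variable [Fintype σ]

noncomputable def laplacian : MvPolynomial σ R →ₗ[R] MvPolynomial σ R :=
  ∑ i, (pderiv i).toLinearMap ∘ₗ (pderiv i).toLinearMap

theorem laplacian_apply (p : MvPolynomial σ R) :
    laplacian p = ∑ i, pderiv i (pderiv i p) := by
  simp [laplacian]

theorem laplacian_mul (f g : MvPolynomial σ R) :
    laplacian (f * g) =
      laplacian f * g + 2 * ∑ i, pderiv i f * pderiv i g + f * laplacian g := by
  simp only [laplacian_apply, pderiv_mul, map_add, Finset.mul_sum, Finset.sum_mul,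
    ← Finset.sum_add_distrib]
  exact Finset.sum_congr rfl fun i _ => by ring

theorem laplacian_X (j : σ) : laplacian (X j : MvPolynomial σ R) = 0 := by
  classical
  simp [laplacian_apply, pderiv_X, Pi.single_apply, apply_ite (pderiv _)]

theorem laplacian_X_mul (j : σ) (p : MvPolynomial σ R) :
    laplacian (X j * p) = 2 * pderiv j p + X j * laplacian p := by
  classical
  simp [laplacian_mul, laplacian_X, pderiv_X, Pi.single_apply]

theorem pderiv_sum_X_sq (i : σ) :
    pderiv i (∑ k, X k ^ 2 : MvPolynomial σ R) = 2 * X i := by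
  classical
  simp [pderiv_X, Pi.single_apply]

theorem laplacian_sum_X_sq :
    laplacian (∑ k, X k ^ 2 : MvPolynomial σ R) = 2 * (Fintype.card σ : MvPolynomial σ R) := by
  have h2 (i : σ) : pderiv i (2 : MvPolynomial σ R) = 0 := by
    exact_mod_cast (pderiv i).map_natCast 2
  simp only [laplacian_apply, pderiv_sum_X_sq]
  simp [h2, mul_comm]

theorem laplacian_sum_X_sq_mul (p : MvPolynomial σ R) :
    laplacian ((∑ k, X k ^ 2) * p) = 2 * (Fintype.card σ : MvPolynomial σ R) * p +
      4 * ∑ i, X i * pderiv i p + (∑ k, X k ^ 2) * laplacian p := by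
  rw [laplacian_mul, laplacian_sum_X_sq]
  simp only [pderiv_sum_X_sq, Finset.mul_sum]
  congr 2
  exact Finset.sum_congr rfl fun i _ => by ring

theorem laplacian_pderiv (j : σ) (p : MvPolynomial σ R) :
    laplacian (pderiv j p) = pderiv j (laplacian p) := by
  simp only [laplacian_apply, map_sum, pderiv_pderiv_comm _ j]

variable {p : MvPolynomial σ R} {n : ℕ}

-- `(n : R) - 1` rather than `↑(n - 1)`: for `n = 0` both sides vanish.
theorem IsHomogeneous.sum_X_mul_pderiv_pderiv (hp : p.IsHomogeneous n) (j : σ) :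
    ∑ i, X i * pderiv i (pderiv j p) = C ((n : R) - 1) * pderiv j p := by
  cases n with
  | zero => simp [hp.pderiv_eq_zero]
  | succ n => simp [hp.pderiv.sum_X_mul_pderiv, nsmul_eq_mul]

theorem IsHomogeneous.X_mul_add_C_mul_sum_X_sq_mul_pderiv (hp : p.IsHomogeneous n) (j : σ)
    (c : R) : (X j * p + C c * (∑ k, X k ^ 2) * pderiv j p).IsHomogeneous (n + 1) := by
  refine .add (add_comm 1 n ▸ (isHomogeneous_X R j).mul hp) ?_
  cases n with
  | zero => simp [hp.pderiv_eq_zero, isHomogeneous_zero]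
  | succ n =>
    have hS : (C c * ∑ k, X k ^ 2 : MvPolynomial σ R).IsHomogeneous 2 :=
      (IsHomogeneous.sum _ _ _ fun k _ => isHomogeneous_X_pow k 2).C_mul c
    convert hS.mul (hp.pderiv (i := j)) using 1
    omega

theorem IsHomogeneous.laplacian_X_mul_add_C_mul_sum_X_sq_mul_pderiv (hp : p.IsHomogeneous n)
    (hΔ : laplacian p = 0) (j : σ) (c : R) :
    laplacian (X j * p + C c * (∑ k, X k ^ 2) * pderiv j p) =
      C (2 + c * (2 * Fintype.card σ + 4 * ((n : R) - 1))) * pderiv j p := by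
  rw [map_add, mul_assoc, ← smul_eq_C_mul, map_smul, laplacian_X_mul, laplacian_sum_X_sq_mul,
    laplacian_pderiv, hp.sum_X_mul_pderiv_pderiv, hΔ]
  simp only [map_add, map_mul, map_zero, map_ofNat, map_natCast, smul_eq_C_mul]
  ring

end MvPolynomial

theorem stmt_5_general (N : ℕ) (h : ℕ) (hNh : N + 2 * h ≠ 2)
    (P : MvPolynomial (Fin N) ℝ)
    (hhom : P.IsHomogeneous h) (hharm : IsFormallyHarmonicReal P) (j : Fin N) :
    ((pderiv j P).IsHomogeneous (h - 1) ∧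
      (h = 0 → pderiv j P = 0) ∧
      IsFormallyHarmonicReal (pderiv j P)) ∧
    ((X j * P +
        C (1 / (2 - (N : ℝ) - 2 * h)) * (∑ i : Fin N, X i ^ 2) * pderiv j P).IsHomogeneous
        (h + 1) ∧
      IsFormallyHarmonicReal
        (X j * P +
          C (1 / (2 - (N : ℝ) - 2 * h)) * (∑ i : Fin N, X i ^ 2) * pderiv j P)) := by
  have hΔ : laplacian P = 0 := (laplacian_apply P).trans hharm
  have hden : (2 : ℝ) - N - 2 * h ≠ 0 := by
    intro h0
    exact hNh (by exact_mod_cast (by linarith : (N : ℝ) + 2 * h = 2))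
  refine ⟨⟨hhom.pderiv, fun h0 => (h0 ▸ hhom).pderiv_eq_zero j, ?_⟩,
    hhom.X_mul_add_C_mul_sum_X_sq_mul_pderiv j _, ?_⟩
  · rw [IsFormallyHarmonicReal, ← laplacian_apply, laplacian_pderiv, hΔ, map_zero]
  · have hcoeff : 2 + 1 / (2 - (N : ℝ) - 2 * h) * (2 * N + 4 * ((h : ℝ) - 1)) = 0 := by
      field_simp
      ring
    rw [IsFormallyHarmonicReal, ← laplacian_apply,
      hhom.laplacian_X_mul_add_C_mul_sum_X_sq_mul_pderiv hΔ, Fintype.card_fin, hcoeff, C_0,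
      zero_mul]

/-- the harmonic decomposition
`x_j·𝒴_h = (x_j𝒴_h + |x|²∂_{x_j}𝒴_h/(1−n−2h)) − |x|²∂_{x_j}𝒴_h/(1−n−2h)`
into harmonic homogeneous parts of degrees `h+1` and `h−1` (with `N = n+1`). -/
theorem stmt_5 (N : ℕ) (hN : 1 ≤ N) (h : ℕ) (hNh : N + 2 * h ≠ 2)
    (P : MvPolynomial (Fin N) ℝ)
    (hhom : P.IsHomogeneous h) (hharm : IsFormallyHarmonicReal P) (j : Fin N) :
    ((pderiv j P).IsHomogeneous (h - 1) ∧
      (h = 0 → pderiv j P = 0) ∧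
      IsFormallyHarmonicReal (pderiv j P)) ∧
    ((X j * P +
        C (1 / (2 - (N : ℝ) - 2 * h)) * (∑ i : Fin N, X i ^ 2) * pderiv j P).IsHomogeneous
        (h + 1) ∧
      IsFormallyHarmonicReal
        (X j * P +
          C (1 / (2 - (N : ℝ) - 2 * h)) * (∑ i : Fin N, X i ^ 2) * pderiv j P)) :=
  stmt_5_general N h hNh P hhom hharm j
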